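/- For the cycle C_n, the allocation of two brushes to any single vertex v_i cleans the graph, every singleton {v_i}, v_i ∈ V(C_n), is a brush centre of C_n, and hence C_n has exactly n possible brush centres; in particular b_r(C_n) = 2. -/

import Mathlib

open Finset
open scoped Classical

/-! ## The cleaning model and brush numbers -/

variable {V : Type*}

/-- `π` is a cleaning sequence (an ordering of the vertices, given by an injective time
function) for the allocation `β` of brushes: every vertex, at the moment it cleans, holds at
least as many brushes (its initial brushes plus one brush received from each already-cleaned
neighbour) as it has dirty incident edges (edges to not-yet-cleaned neighbours), so it can send
one brush along each dirty incident edge. -/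
def SimpleGraph.CleaningOrder [Fintype V] (G : SimpleGraph V) (β : V → ℕ) (π : V → ℕ) : Prop :=
  Function.Injective π ∧
  ∀ v : V, (Finset.univ.filter fun u => G.Adj v u ∧ π v < π u).card ≤
    β v + (Finset.univ.filter fun u => G.Adj v u ∧ π u < π v).card

/-- The allocation `β` of brushes can clean the graph `G` (all edges start dirty, and
sequentially every vertex with at least as many brushes as dirty incident edges may clean,
sending one brush along each dirty incident edge). -/
def SimpleGraph.Cleans [Fintype V] (G : SimpleGraph V) (β : V → ℕ) : Prop :=
  ∃ π : V → ℕ, G.CleaningOrder β π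

/-- The brush number of `G`: the minimum total number of brushes, over all initial
allocations, which allows all edges of `G` to be cleaned. -/
noncomputable def SimpleGraph.brushNumber [Fintype V] (G : SimpleGraph V) : ℕ :=
  sInf {b : ℕ | ∃ β : V → ℕ, (∑ v, β v) = b ∧ G.Cleans β}

/-- The number of brushes located at vertex `v` at the end of the cleaning sequence `π`
with initial allocation `β`: `v` keeps its initial brushes, receives one from each neighbour
cleaned before it, and sends one to each neighbour cleaned after it. -/
noncomputable def SimpleGraph.finalBrushes [Fintype V] (G : SimpleGraph V)
    (β : V → ℕ) (π : V → ℕ) (v : V) : ℕ :=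
  β v + (Finset.univ.filter fun u => G.Adj v u ∧ π u < π v).card
      - (Finset.univ.filter fun u => G.Adj v u ∧ π v < π u).card

/-! ## Orientations -/

/-- An orientation of a simple graph `G`: each edge is given exactly one direction. -/
structure SimpleGraph.GraphOrientation (G : SimpleGraph V) where
  /-- the arc relation of the orientation -/
  arc : V → V → Prop
  adj_iff : ∀ u v, G.Adj u v ↔ (arc u v ∨ arc v u)
  asymm : ∀ u v, arc u v → ¬ arc v u

/-- Out-degree of a vertex under an orientation. -/
noncomputable def SimpleGraph.GraphOrientation.outDeg [Fintype V] {G : SimpleGraph V}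
    (α : G.GraphOrientation) (v : V) : ℕ :=
  (Finset.univ.filter fun u => α.arc v u).card

/-- In-degree of a vertex under an orientation. -/
noncomputable def SimpleGraph.GraphOrientation.inDeg [Fintype V] {G : SimpleGraph V}
    (α : G.GraphOrientation) (v : V) : ℕ :=
  (Finset.univ.filter fun u => α.arc u v).card

/-- `b_r^α(G)`: the minimum number of brushes needed to clean `G` when brushes may only
travel along out-arcs of the orientation `α` (so a vertex may clean only after all its
in-neighbours have cleaned, and then needs one brush for each out-arc), with value `∞` if
cleaning is impossible under `α`. -/
noncomputable def SimpleGraph.GraphOrientation.brushNumber [Fintype V] {G : SimpleGraph V}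
    (α : G.GraphOrientation) : ℕ∞ :=
  sInf {c : ℕ∞ | ∃ (β : V → ℕ) (π : V → ℕ), Function.Injective π ∧
    (∀ u v, α.arc u v → π u < π v) ∧
    (∀ v, α.outDeg v ≤ β v + α.inDeg v) ∧ c = (∑ v, β v : ℕ)}

/-! ## Brush centres -/

/-- `B` is a possible location set for a minimal brush allocation: the `b_r(G)` brushes can
be allocated to vertices of `B` so that `G` can be cleaned. -/
def SimpleGraph.CentreCandidate [Fintype V] (G : SimpleGraph V) (B : Finset V) : Prop :=
  ∃ β : V → ℕ, (∀ v, β v ≠ 0 → v ∈ B) ∧ (∑ v, β v) = G.brushNumber ∧ G.Cleans β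

/-- The maximum distance between vertices of `B` in `G`. -/
noncomputable def SimpleGraph.centreSpread [Fintype V] (G : SimpleGraph V) (B : Finset V) : ℕ :=
  B.sup fun v => B.sup fun u => G.dist v u

/-- `B` is a brush centre of `G`: a set of minimum cardinality to which the `b_r(G)` brushes
can be allocated so that `G` can be cleaned (primary condition), and which, among such sets of
minimum cardinality, minimizes the maximum distance between its vertices (secondary
condition). -/
def SimpleGraph.IsBrushCentre [Fintype V] (G : SimpleGraph V) (B : Finset V) : Prop :=
  G.CentreCandidate B ∧
  (∀ B' : Finset V, G.CentreCandidate B' → B.card ≤ B'.card) ∧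
  (∀ B' : Finset V, G.CentreCandidate B' → B'.card = B.card →
    G.centreSpread B ≤ G.centreSpread B')

/-! ## Jaco graphs -/

/-- The in-degree `d⁻(v_j)` of the vertex `v_j` in the infinite Jaco graph `J_∞(1)`:
`(v_i, v_j)` is an arc iff `1 ≤ i < j` and `2i - d⁻(v_i) ≥ j`. -/
noncomputable def jacoIn (j : ℕ) : ℕ :=
  Nat.strongRecOn j fun j ih =>
    ((Finset.range j).attach.filter fun i =>
      0 < i.1 ∧ j + ih i.1 (Finset.mem_range.mp i.2) ≤ 2 * i.1).card

/-- The arc relation of the infinite Jaco graph `J_∞(1)`: `(v_i, v_j)` is an arc iff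
`1 ≤ i < j` and `2i - d⁻(v_i) ≥ j`. -/
def jacoArc (i j : ℕ) : Prop := 0 < i ∧ i < j ∧ j + jacoIn i ≤ 2 * i

/-- The finite Jaco graph `J_n(1)` as a simple graph on `Fin n`;
vertex `k : Fin n` stands for `v_{k+1}`. -/
def jacoGraph (n : ℕ) : SimpleGraph (Fin n) where
  Adj a b := jacoArc ((a : ℕ) + 1) ((b : ℕ) + 1) ∨ jacoArc ((b : ℕ) + 1) ((a : ℕ) + 1)
  symm := by refine ⟨?_⟩; intro a b h; tauto
  loopless := by refine ⟨?_⟩; intro a h; rcases h with h | h <;> exact absurd h.2.1 (lt_irrefl _)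

/-- The out-degree of `v_i` in the finite Jaco graph `J_n(1)` (under its defining
orientation). -/
noncomputable def jacoOutDeg (n i : ℕ) : ℕ := ((Finset.Icc 1 n).filter fun j => jacoArc i j).card

/-- The in-degree of `v_j` in the finite Jaco graph `J_n(1)` (under its defining
orientation). -/
noncomputable def jacoInDeg (n j : ℕ) : ℕ := ((Finset.Icc 1 n).filter fun i => jacoArc i j).card

/-- The degree of `v_j` in the finite Jaco graph `J_n(1)`. -/
noncomputable def jacoDegree (n j : ℕ) : ℕ := jacoInDeg n j + jacoOutDeg n j

/-- The index `i` of the prime Jaconian vertex `v_i` of `J_n(1)`: the lowest-indexed vertex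
attaining the maximum degree `Δ(J_n(1))`. -/
noncomputable def primeJaconianIdx (n : ℕ) : ℕ :=
  sInf {i : ℕ | i ∈ Finset.Icc 1 n ∧ ∀ j ∈ Finset.Icc 1 n, jacoDegree n j ≤ jacoDegree n i}

/-! ## The Mycielskian -/

/-- The adjacency relation of the Mycielskian of `G`: `Sum.inl v` is the original vertex `v`,
`Sum.inr (Sum.inl v)` is its shadow `x_v`, and `Sum.inr (Sum.inr ())` is the apex `w`. -/
def mycAdj (G : SimpleGraph V) : V ⊕ V ⊕ Unit → V ⊕ V ⊕ Unit → Prop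
  | Sum.inl u, Sum.inl v => G.Adj u v
  | Sum.inl u, Sum.inr (Sum.inl v) => G.Adj u v
  | Sum.inr (Sum.inl u), Sum.inl v => G.Adj u v
  | Sum.inr (Sum.inl _), Sum.inr (Sum.inr _) => True
  | Sum.inr (Sum.inr _), Sum.inr (Sum.inl _) => True
  | _, _ => False

/-- The Mycielskian `μ(G)` of a simple graph `G`: vertex set `V(G) ∪ {x_v : v ∈ V(G)} ∪ {w}`,
with edges `uv` for `uv ∈ E(G)`, `u x_v` and `v x_u` for `uv ∈ E(G)`, and `w x_v` for all
`v ∈ V(G)`. -/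
def mycielskian (G : SimpleGraph V) : SimpleGraph (V ⊕ V ⊕ Unit) where
  Adj := mycAdj G
  symm := by
    refine ⟨?_⟩
    rintro (u | u | u) (v | v | v) h <;> simp only [mycAdj] at h ⊢ <;> first
      | exact h.symm | exact h | trivial
  loopless := by
    refine ⟨?_⟩
    rintro (u | u | u) h <;> simp only [mycAdj] at h <;> exact G.loopless.irrefl _ h

/-! ## Disjoint unions -/

/-- The disjoint union of an indexed family of simple graphs. -/
def sigmaGraph {ι : Type*} {W : ι → Type*} (G : ∀ i, SimpleGraph (W i)) :
    SimpleGraph (Σ i, W i) where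
  Adj a b := ∃ (i : ι) (x y : W i), (G i).Adj x y ∧ a = ⟨i, x⟩ ∧ b = ⟨i, y⟩
  symm := by refine ⟨?_⟩; rintro _ _ ⟨i, x, y, h, rfl, rfl⟩; exact ⟨i, y, x, h.symm, rfl, rfl⟩
  loopless := by
    refine ⟨?_⟩
    rintro _ ⟨i, x, y, h, rfl, he⟩
    obtain rfl : x = y := by simpa using he
    exact (G i).loopless.irrefl x h

/-!
Clean `C_n` around the cycle starting at `v`: `v` spends its two brushes on its two edges, and
every later vertex receives one brush from its predecessor, which it passes on along its one
remaining dirty edge. Conversely, the first vertex to clean receives nothing, so it alone must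
hold as many brushes as its degree, `2`. Since `b_r(C_n) = 2 ≠ 0`, a brush centre has at least
one vertex, and as every singleton carries an optimal allocation, the centres are exactly the
`n` singletons.
-/

namespace SimpleGraph

variable [Fintype V] {G : SimpleGraph V} {β π : V → ℕ}

theorem card_later_add_card_earlier [G.LocallyFinite] (hπ : Function.Injective π) (v : V) :
    #{u | G.Adj v u ∧ π v < π u} + #{u | G.Adj v u ∧ π u < π v} = G.degree v := by
  rw [← card_neighborFinset_eq_degree, ← card_union_of_disjoint]
  · congr 1
    ext u
    simp only [mem_union, mem_filter, mem_univ, true_and, mem_neighborFinset]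
    refine ⟨by rintro (h | h) <;> exact h.1, fun h => ?_⟩
    rcases (hπ.ne (G.ne_of_adj h)).lt_or_gt with hlt | hlt
    · exact .inl ⟨h, hlt⟩
    · exact .inr ⟨h, hlt⟩
  · exact disjoint_filter.2 fun u _ h h' => h.2.asymm h'.2

theorem cleaningOrder_of_degree_le [G.LocallyFinite] (hπ : Function.Injective π)
    (h : ∀ v, G.degree v ≤ β v + 2 * #{u | G.Adj v u ∧ π u < π v}) : G.CleaningOrder β π :=
  ⟨hπ, fun v => by have := card_later_add_card_earlier (G := G) hπ v; have := h v; omega⟩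

theorem CleaningOrder.degree_le_of_forall_le [G.LocallyFinite] (hc : G.CleaningOrder β π) {v : V}
    (hv : ∀ u, π v ≤ π u) : G.degree v ≤ β v := by
  have hearlier : #{u | G.Adj v u ∧ π u < π v} = 0 :=
    card_eq_zero.2 <| filter_eq_empty_iff.2 fun u _ h => (hv u).not_gt h.2
  have := card_later_add_card_earlier (G := G) hc.1 v
  have := hc.2 v
  omega

theorem Cleans.minDegree_le_sum [DecidableRel G.Adj] [Nonempty V] (h : G.Cleans β) :
    G.minDegree ≤ ∑ v, β v := by
  obtain ⟨π, hc⟩ := h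
  obtain ⟨v, -, hv⟩ := exists_min_image univ π univ_nonempty
  calc G.minDegree ≤ G.degree v := G.minDegree_le_degree v
    _ ≤ β v := hc.degree_le_of_forall_le fun u => hv u (mem_univ u)
    _ ≤ ∑ u, β u := single_le_sum (fun _ _ => Nat.zero_le _) (mem_univ v)

theorem brushNumber_eq_sum (hβ : G.Cleans β)
    (hmin : ∀ β', G.Cleans β' → ∑ v, β v ≤ ∑ v, β' v) : G.brushNumber = ∑ v, β v :=
  IsLeast.csInf_eq ⟨⟨β, rfl, hβ⟩, by rintro _ ⟨β', rfl, hβ'⟩; exact hmin β' hβ'⟩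

theorem CentreCandidate.nonempty {B : Finset V} (h0 : G.brushNumber ≠ 0)
    (hB : G.CentreCandidate B) : B.Nonempty := by
  obtain ⟨β, hsupp, hsum, -⟩ := hB
  obtain ⟨v, -, hv⟩ := exists_ne_zero_of_sum_ne_zero (hsum ▸ h0)
  exact ⟨v, hsupp v hv⟩

theorem centreCandidate_singleton [DecidableEq V] {v : V}
    (h : G.Cleans fun u => if u = v then G.brushNumber else 0) : G.CentreCandidate {v} :=
  ⟨_, fun u hu => mem_singleton.2 <| by_contra fun huv => hu (if_neg huv), by simp, h⟩

theorem isBrushCentre_singleton (h0 : G.brushNumber ≠ 0) {v : V}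
    (hv : G.CentreCandidate {v}) : G.IsBrushCentre {v} :=
  ⟨hv, fun _ hB => by simpa using (hB.nonempty h0).card_pos, fun _ _ _ => by simp [centreSpread]⟩

theorem IsBrushCentre.exists_eq_singleton (h0 : G.brushNumber ≠ 0) {v : V}
    (hv : G.CentreCandidate {v}) {B : Finset V} (hB : G.IsBrushCentre B) : ∃ w, B = {w} :=
  card_eq_one.1 <| le_antisymm (by simpa using hB.2.1 _ hv) (hB.1.nonempty h0).card_pos

theorem ncard_setOf_isBrushCentre (h0 : G.brushNumber ≠ 0)
    (hcand : ∀ v, G.CentreCandidate {v}) : {B | G.IsBrushCentre B}.ncard = Fintype.card V := by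
  have hrange : {B | G.IsBrushCentre B} = Set.range ({·}) := by
    ext B
    refine ⟨fun hB => ?_, ?_⟩
    · obtain ⟨v, -⟩ := hB.1.nonempty h0
      obtain ⟨w, rfl⟩ := hB.exists_eq_singleton h0 (hcand v)
      exact ⟨w, rfl⟩
    · rintro ⟨v, rfl⟩
      exact isBrushCentre_singleton h0 (hcand v)
  rw [hrange, ← Set.image_univ, Set.ncard_image_of_injective _ singleton_injective,
    Set.ncard_univ, Nat.card_eq_fintype_card]

end SimpleGraph

open SimpleGraph

theorem cycleGraph_cleans_two_at {n : ℕ} (v : Fin (n + 3)) :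
    (cycleGraph (n + 3)).Cleans fun u => if u = v then 2 else 0 := by
  refine ⟨fun u => (u - v).val, cleaningOrder_of_degree_le (fun a b h => ?_) fun u => ?_⟩
  · simpa using Fin.val_injective h
  rw [cycleGraph_degree_three_le]
  by_cases huv : u = v
  · simp [huv]
  · have hadj : (cycleGraph (n + 3)).Adj u (u - 1) :=
      cycleGraph_adj.2 (.inl (sub_sub_cancel u 1))
    have hlt : (u - 1 - v).val < (u - v).val := by
      rw [sub_right_comm, Fin.coe_sub_one, if_neg (sub_ne_zero_of_ne huv)]
      have : (u - v).val ≠ 0 := Fin.val_ne_of_ne (sub_ne_zero_of_ne huv)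
      omega
    rw [if_neg huv, zero_add]
    exact Nat.mul_le_mul_left 2 (card_pos.2 ⟨u - 1, by simpa [hadj] using hlt⟩)

theorem cycleGraph_brushNumber {n : ℕ} : (cycleGraph (n + 3)).brushNumber = 2 := by
  refine (brushNumber_eq_sum (cycleGraph_cleans_two_at 0) fun β hβ => ?_).trans (by simp)
  calc ∑ u : Fin (n + 3), (if u = 0 then 2 else 0) = 2 := by simp
    _ ≤ (cycleGraph (n + 3)).minDegree :=
      le_minDegree_of_forall_le_degree _ _ fun _ => cycleGraph_degree_three_le.ge
    _ ≤ ∑ u, β u := hβ.minDegree_le_sum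

/-- For the cycle `C_n`, the allocation of two brushes to any single vertex
cleans the graph, every singleton `{v}` is a brush centre of `C_n`, and `C_n` has exactly these
`n` brush centres; in particular `b_r(C_n) = 2`. -/
theorem brushCentres_cycleGraph (n : ℕ) (hn : 3 ≤ n) :
    (∀ v : Fin n, (SimpleGraph.cycleGraph n).Cleans (fun u => if u = v then 2 else 0)) ∧
    (∀ v : Fin n, (SimpleGraph.cycleGraph n).IsBrushCentre {v}) ∧
    (∀ B : Finset (Fin n), (SimpleGraph.cycleGraph n).IsBrushCentre B → ∃ v, B = {v}) ∧
    {B : Finset (Fin n) | (SimpleGraph.cycleGraph n).IsBrushCentre B}.ncard = n ∧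
    (SimpleGraph.cycleGraph n).brushNumber = 2 := by
  obtain ⟨m, rfl⟩ : ∃ m, n = m + 3 := ⟨n - 3, by omega⟩
  have h0 : (cycleGraph (m + 3)).brushNumber ≠ 0 := by simp [cycleGraph_brushNumber]
  have hcand (v : Fin (m + 3)) : (cycleGraph (m + 3)).CentreCandidate {v} :=
    centreCandidate_singleton <| by
      simpa only [cycleGraph_brushNumber] using cycleGraph_cleans_two_at v
  refine ⟨cycleGraph_cleans_two_at, fun v => isBrushCentre_singleton h0 (hcand v),
    fun B hB => hB.exists_eq_singleton h0 (hcand 0), ?_, cycleGraph_brushNumber⟩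
  rw [ncard_setOf_isBrushCentre h0 hcand, Fintype.card_fin]
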